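/- Let n ≥ 2 and let K_i be a sequence of origin-symmetric convex bodies in ℝⁿ with r_i := max_{v∈S^{n-1}} h_{K_i}(v) → ∞. Then for every c with 0 < c ≤ 1 and every v ∈ S^{n-1}, ∫_{ω_i} e^{-|x|²/2} dH^{n-1}(x) → 0 as i → ∞, where ω_i = {x ∈ ∂K_i : x·v > c r_i}. -/

import Mathlib

open MeasureTheory Metric Set Filter
open scoped RealInnerProductSpace Topology Pointwise NNReal ENNReal

noncomputable section

/-- `ℝⁿ` as Euclidean space. -/
abbrev Eu (n : ℕ) := EuclideanSpace ℝ (Fin n)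

/-- The Gaussian measure `γₙ(A) = (2π)^{-n/2} ∫_A e^{-|x|²/2} dx`. -/
def gaussVol (n : ℕ) (A : Set (Eu n)) : ℝ :=
  (Real.sqrt (2 * Real.pi))⁻¹ ^ n * ∫ x in A, Real.exp (-‖x‖ ^ 2 / 2)

/-- A convex body: a compact convex set with nonempty interior. -/
def IsConvexBody {n : ℕ} (K : Set (Eu n)) : Prop :=
  Convex ℝ K ∧ IsCompact K ∧ (interior K).Nonempty

/-- The support function `h_K(v) = max_{y ∈ K} ⟪y, v⟫`. -/
def suppFun {n : ℕ} (K : Set (Eu n)) (v : Eu n) : ℝ :=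
  sSup ((fun y => ⟪y, v⟫) '' K)

/-- The Gaussian surface area measure of `K`, as a set function:
`S_{γₙ,K}(η) = (2π)^{-n/2} ∫_{ν_K⁻¹(η)} e^{-|x|²/2} dH^{n-1}(x)`, where
`ν_K⁻¹(η)` is the set of boundary points of `K` having an outer unit normal in `η`. -/
def gaussSurf (n : ℕ) (K : Set (Eu n)) (η : Set (Eu n)) : ℝ :=
  (Real.sqrt (2 * Real.pi))⁻¹ ^ n *
    ∫ x in {x | x ∈ frontier K ∧ ∃ v ∈ η, ⟪x, v⟫ = suppFun K v},
      Real.exp (-‖x‖ ^ 2 / 2) ∂μH[(n : ℝ) - 1]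

open Classical in
/-- (A choice of) Gauss map of `K`: to a boundary point `x` it assigns an outer unit
normal of `K` at `x` (for a convex body `K`, this is unique for `H^{n-1}`-a.e. `x ∈ ∂K`). -/
def gaussMap {n : ℕ} (K : Set (Eu n)) (x : Eu n) : Eu n :=
  if h : ∃ v : Eu n, ‖v‖ = 1 ∧ ⟪x, v⟫ = suppFun K v then h.choose else 0

/-- The Wulff shape `[g] = {x : x·v ≤ g v for all unit v}`. -/
def wulff {n : ℕ} (g : Eu n → ℝ) : Set (Eu n) :=
  {x | ∀ v : Eu n, ‖v‖ = 1 → ⟪x, v⟫ ≤ g v}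

/-- The radial function `ρ_K(u) = max {r : r • u ∈ K}`. -/
def radialFun {n : ℕ} (K : Set (Eu n)) (u : Eu n) : ℝ :=
  sSup {r : ℝ | r • u ∈ K}

/-- The standard Gaussian distribution function `Φ`. -/
def Phi (x : ℝ) : ℝ :=
  (Real.sqrt (2 * Real.pi))⁻¹ * ∫ t in Iic x, Real.exp (-t ^ 2 / 2)

/-- The inverse `Φ⁻¹` of the standard Gaussian distribution function. -/
def PhiInv : ℝ → ℝ := Function.invFun Phi

namespace FarBoundary

/-- The sup norm on Euclidean space. -/
def nsup {n : ℕ} (y : Eu n) : ℝ := ‖(WithLp.equiv 2 (Fin n → ℝ)) y‖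

lemma abs_apply_le_nsup {n : ℕ} (y : Eu n) (j : Fin n) : |y j| ≤ nsup y := by
  simpa [nsup] using norm_le_pi_norm ((WithLp.equiv 2 (Fin n → ℝ)) y) j

lemma nsup_le {n : ℕ} (y : Eu n) {M : ℝ} (hM : 0 ≤ M) (h : ∀ j, |y j| ≤ M) : nsup y ≤ M := by
  refine (pi_norm_le_iff_of_nonneg hM).2 ?_
  simpa [Real.norm_eq_abs] using h

lemma nsup_le_norm {n : ℕ} (y : Eu n) : nsup y ≤ ‖y‖ := by
  refine nsup_le _ (norm_nonneg _) fun j => ?_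
  have h := EuclideanSpace.norm_eq y
  have h1 : |y j| = Real.sqrt (|y j| ^ 2) := by
    rw [Real.sqrt_sq_eq_abs, abs_abs]
  rw [h1, h]
  apply Real.sqrt_le_sqrt
  have : |y j| ^ 2 = ‖y j‖ ^ 2 := by rw [Real.norm_eq_abs]
  rw [this]
  exact Finset.single_le_sum (f := fun i => ‖y i‖ ^ 2) (fun i _ => by positivity) (Finset.mem_univ j)

lemma norm_le_sqrt_mul_nsup {n : ℕ} (y : Eu n) : ‖y‖ ≤ Real.sqrt n * nsup y := by
  have h0 : 0 ≤ nsup y := norm_nonneg _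
  rw [EuclideanSpace.norm_eq]
  have : ∑ i, ‖y i‖ ^ 2 ≤ n * nsup y ^ 2 := by
    calc ∑ i, ‖y i‖ ^ 2 ≤ ∑ _i : Fin n, nsup y ^ 2 := by
          refine Finset.sum_le_sum fun i _ => ?_
          have := abs_apply_le_nsup y i
          rw [Real.norm_eq_abs]
          nlinarith [abs_nonneg (y i)]
      _ = n * nsup y ^ 2 := by simp [Finset.sum_const, mul_comm]
  calc Real.sqrt (∑ i, ‖y i‖ ^ 2) ≤ Real.sqrt ((n : ℝ) * nsup y ^ 2) := Real.sqrt_le_sqrt this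
    _ = Real.sqrt n * nsup y := by
        rw [Real.sqrt_mul (by positivity), Real.sqrt_sq h0]

lemma continuous_nsup {n : ℕ} : Continuous (nsup (n := n)) := by
  exact (PiLp.continuous_ofLp 2 (fun _ : Fin n => ℝ)).norm

end FarBoundary
namespace FarBoundary

lemma exists_proj {n : ℕ} {K : Set (Eu n)} (hconv : Convex ℝ K) (hcl : IsClosed K)
    (hne : K.Nonempty) :
    ∃ P : Eu n → Eu n, LipschitzWith 1 P ∧ (∀ p, P p ∈ K) ∧
      ∀ p, ∀ w ∈ K, ⟪p - P p, w - P p⟫ ≤ 0 := by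
  have hex : ∀ p : Eu n, ∃ q, q ∈ K ∧ ∀ w ∈ K, ⟪p - q, w - q⟫ ≤ 0 := by
    intro p
    obtain ⟨q, hqK, hq⟩ := exists_norm_eq_iInf_of_complete_convex hne hcl.isComplete hconv p
    exact ⟨q, hqK, (norm_eq_iInf_iff_real_inner_le_zero hconv hqK).1 hq⟩
  choose P hPK hP using hex
  refine ⟨P, ?_, hPK, hP⟩
  refine LipschitzWith.of_dist_le_mul fun p₁ p₂ => ?_
  rw [dist_eq_norm, dist_eq_norm]
  push_cast
  rw [one_mul]
  have h1 := hP p₁ (P p₂) (hPK p₂)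
  have h2 := hP p₂ (P p₁) (hPK p₁)
  have key : ‖P p₁ - P p₂‖ ^ 2 ≤ ⟪p₁ - p₂, P p₁ - P p₂⟫ := by
    have e1 : ⟪p₁ - P p₁, P p₂ - P p₁⟫ = -⟪p₁ - P p₁, P p₁ - P p₂⟫ := by
      rw [← inner_neg_right]; congr 1; abel
    have e2 : ⟪p₁ - p₂, P p₁ - P p₂⟫
        = ⟪p₁ - P p₁, P p₁ - P p₂⟫ - ⟪p₂ - P p₂, P p₁ - P p₂⟫
          + ⟪P p₁ - P p₂, P p₁ - P p₂⟫ := by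
      rw [← inner_sub_left, ← inner_add_left]; congr 1; abel
    have e3 : ⟪P p₁ - P p₂, P p₁ - P p₂⟫ = ‖P p₁ - P p₂‖ ^ 2 := by
      rw [real_inner_self_eq_norm_sq]
    rw [e1] at h1
    linarith [e2, e3.symm ▸ e2]
  have h3 := real_inner_le_norm (p₁ - p₂) (P p₁ - P p₂)
  rcases eq_or_lt_of_le (norm_nonneg (P p₁ - P p₂)) with h | h
  · rw [← h]; exact norm_nonneg _
  · nlinarith

lemma exists_unit_outer_normal {n : ℕ} {K : Set (Eu n)} (hconv : Convex ℝ K)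
    (hint : (interior K).Nonempty) {x : Eu n} (hx : x ∈ frontier K) :
    ∃ u : Eu n, ‖u‖ = 1 ∧ ∀ y ∈ K, ⟪y - x, u⟫ ≤ 0 := by
  obtain ⟨a₀, ha₀⟩ := hint
  have hxint : x ∉ interior K := hx.2
  obtain ⟨f, hf⟩ := geometric_hahn_banach_open_point (hconv.interior) isOpen_interior hxint
  have hfne : f ≠ 0 := by
    intro h
    have := hf a₀ ha₀
    rw [h] at this
    simp at this
  set w := (InnerProductSpace.toDual ℝ (Eu n)).symm f with hw
  have hwne : w ≠ 0 := by
    intro h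
    apply hfne
    have : (InnerProductSpace.toDual ℝ (Eu n)) w = f := by
      simp [hw]
    rw [← this, h, map_zero]
  have hfapp : ∀ y, f y = ⟪w, y⟫ := by
    intro y
    have : (InnerProductSpace.toDual ℝ (Eu n)) w = f := by simp [hw]
    rw [← this]
    simp [InnerProductSpace.toDual_apply_apply]
  refine ⟨‖w‖⁻¹ • w, ?_, ?_⟩
  · rw [norm_smul, norm_inv, norm_norm, inv_mul_cancel₀ (norm_ne_zero_iff.2 hwne)]
  · intro y hy
    -- first: f y ≤ f x for all y ∈ K
    have hle : f y ≤ f x := by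
      have hycl : y ∈ closure (interior K) := by
        have htend : Tendsto (fun k : ℕ => y + (1 / ((k : ℝ) + 1)) • (a₀ - y)) atTop (𝓝 y) := by
          have h0 : Tendsto (fun k : ℕ => 1 / ((k : ℝ) + 1)) atTop (𝓝 (0 : ℝ)) :=
            tendsto_one_div_add_atTop_nhds_zero_nat
          have := (h0.smul_const (a₀ - y)).const_add y
          simpa using this
        refine mem_closure_of_tendsto htend ?_
        filter_upwards with k
        refine hconv.add_smul_sub_mem_interior hy ha₀ ?_
        constructor
        · positivity
        · rw [div_le_one (by positivity)]; have : (0:ℝ) ≤ (k:ℝ) := Nat.cast_nonneg k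
          linarith
      have hsub : closure (interior K) ⊆ {z | f z ≤ f x} := by
        apply closure_minimal
        · intro z hz; exact (hf z hz).le
        · exact isClosed_le f.continuous continuous_const
      exact hsub hycl
    rw [hfapp y, hfapp x] at hle
    rw [real_inner_smul_right]
    have : ⟪y - x, w⟫ ≤ 0 := by
      rw [inner_sub_left, real_inner_comm y w, real_inner_comm x w] at *
      linarith
    have hn : 0 ≤ ‖w‖⁻¹ := by positivity
    exact mul_nonpos_of_nonneg_of_nonpos hn this

end FarBoundary
namespace FarBoundary

/-- The cube "sphere" of radius `R` for the sup norm. -/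
def cubeSphere (n : ℕ) (R : ℝ) : Set (Eu n) := {y | nsup y = R}

lemma nsup_smul {n : ℕ} (a : ℝ) (y : Eu n) : nsup (a • y) = |a| * nsup y := by
  simp [nsup, norm_smul, Real.norm_eq_abs]

lemma cubeSphere_eq_smul {n : ℕ} {R : ℝ} (hR : 0 < R) :
    cubeSphere n R = R • cubeSphere n 1 := by
  ext y
  constructor
  · intro (h : nsup y = R)
    refine ⟨R⁻¹ • y, ?_, ?_⟩
    · show nsup (R⁻¹ • y) = 1
      rw [nsup_smul, h, abs_of_pos (by positivity), inv_mul_cancel₀ hR.ne']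
    · show R • (R⁻¹ • y) = y
      rw [smul_inv_smul₀ hR.ne']
  · rintro ⟨x, hx, rfl⟩
    show nsup (R • x) = R
    rw [nsup_smul, hx, abs_of_pos hR, mul_one]

/-- Embedding of `Eu m` into `Eu (m+1)` as the hyperplane with `j`-th coordinate `ε`. -/
def faceEmb {m : ℕ} (j : Fin (m + 1)) (ε : ℝ) (z : Eu m) : Eu (m + 1) :=
  (WithLp.equiv 2 (Fin (m + 1) → ℝ)).symm
    (Fin.insertNth j ε ((WithLp.equiv 2 (Fin m → ℝ)) z))

lemma isometry_faceEmb {m : ℕ} (j : Fin (m + 1)) (ε : ℝ) : Isometry (faceEmb j ε) := by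
  refine Isometry.of_dist_eq fun z z' => ?_
  rw [EuclideanSpace.dist_eq, EuclideanSpace.dist_eq]
  congr 1
  rw [Fin.sum_univ_succAbove (fun i => dist (faceEmb j ε z i) (faceEmb j ε z' i) ^ 2) j]
  simp [faceEmb]

lemma volume_box_lt_top {m : ℕ} :
    (volume : Measure (Fin m → ℝ)) {z : Fin m → ℝ | ∀ k, |z k| ≤ 1} < ∞ := by
  refine lt_of_le_of_lt (measure_mono ?_) (measure_closedBall_lt_top (x := (0 : Fin m → ℝ)) (r := 1))
  intro z hz
  rw [mem_closedBall, dist_zero_right]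
  refine (pi_norm_le_iff_of_nonneg zero_le_one).2 fun k => ?_
  simpa [Real.norm_eq_abs] using hz k

lemma measure_box_ne_top {m : ℕ} :
    μH[(m : ℝ)] {z : Eu m | ∀ k, |z k| ≤ 1} ≠ ∞ := by
  set B' : Set (Fin m → ℝ) := {z | ∀ k, |z k| ≤ 1} with hB'
  have himg : {z : Eu m | ∀ k, |z k| ≤ 1}
      = (WithLp.equiv 2 (Fin m → ℝ)).symm '' B' := by
    ext z
    constructor
    · intro hz
      exact ⟨(WithLp.equiv 2 (Fin m → ℝ)) z, hz, by simp⟩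
    · rintro ⟨w, hw, rfl⟩
      exact hw
  have hlip : LipschitzWith (Real.toNNReal (Real.sqrt m))
      ((WithLp.equiv 2 (Fin m → ℝ)).symm) := by
    refine LipschitzWith.of_dist_le_mul fun z z' => ?_
    rw [dist_eq_norm, dist_eq_norm]
    have he : (WithLp.equiv 2 (Fin m → ℝ)).symm z - (WithLp.equiv 2 (Fin m → ℝ)).symm z'
        = (WithLp.equiv 2 (Fin m → ℝ)).symm (z - z') := rfl
    rw [he]
    have h1 := norm_le_sqrt_mul_nsup ((WithLp.equiv 2 (Fin m → ℝ)).symm (z - z'))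
    have h2 : nsup ((WithLp.equiv 2 (Fin m → ℝ)).symm (z - z')) = ‖z - z'‖ := by
      rw [nsup, Equiv.apply_symm_apply]
    rw [h2] at h1
    refine h1.trans ?_
    gcongr
    exact Real.coe_toNNReal _ (Real.sqrt_nonneg _) |>.ge
  have hle := hlip.hausdorffMeasure_image_le (d := (m : ℝ)) (Nat.cast_nonneg m) B'
  rw [himg]
  have hpi : (μH[(m : ℝ)] : Measure (Fin m → ℝ)) B' = volume B' := by
    have := hausdorffMeasure_pi_real (ι := Fin m)
    rw [Fintype.card_fin] at this
    rw [this]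
  refine ne_top_of_le_ne_top ?_ hle
  rw [hpi]
  exact ENNReal.mul_ne_top
    (ENNReal.rpow_ne_top_of_nonneg (Nat.cast_nonneg m) ENNReal.coe_ne_top)
    volume_box_lt_top.ne

end FarBoundary
namespace FarBoundary

lemma cubeSphere_one_ne_top {n : ℕ} (hn : 2 ≤ n) : μH[(n : ℝ) - 1] (cubeSphere n 1) ≠ ∞ := by
  obtain ⟨m, rfl⟩ : ∃ m, n = m + 1 := ⟨n - 1, by omega⟩
  have hd : ((m + 1 : ℕ) : ℝ) - 1 = (m : ℝ) := by push_cast; ring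
  rw [hd]
  set B : Set (Eu m) := {z : Eu m | ∀ k, |z k| ≤ 1} with hB
  have hcover : cubeSphere (m + 1) 1 ⊆
      ⋃ p : Fin (m + 1) × Bool, faceEmb p.1 (cond p.2 1 (-1)) '' B := by
    intro y hy
    have hy1 : nsup y = 1 := hy
    obtain ⟨j, -, hj⟩ := Finset.exists_max_image Finset.univ (fun j => |y j|)
      ⟨⟨0, by omega⟩, Finset.mem_univ _⟩
    have hjle : |y j| ≤ 1 := hy1 ▸ abs_apply_le_nsup y j
    have hjge : (1 : ℝ) ≤ |y j| := by
      rw [← hy1]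
      exact nsup_le y (abs_nonneg _) fun k => hj k (Finset.mem_univ k)
    have hja : |y j| = 1 := le_antisymm hjle hjge
    have hcase : y j = 1 ∨ y j = -1 := abs_eq (by norm_num) |>.1 hja
    set z : Eu m := (WithLp.equiv 2 (Fin m → ℝ)).symm
      (j.removeNth ((WithLp.equiv 2 (Fin (m + 1) → ℝ)) y)) with hz
    have hzB : z ∈ B := by
      intro k
      have : z k = y (j.succAbove k) := rfl
      rw [this, ← hy1]
      exact abs_apply_le_nsup y _
    have hemb : ∀ ε : ℝ, ε = y j → faceEmb j ε z = y := by
      intro ε hε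
      rw [faceEmb, Equiv.symm_apply_eq]
      have : (WithLp.equiv 2 (Fin m → ℝ)) z
          = j.removeNth ((WithLp.equiv 2 (Fin (m + 1) → ℝ)) y) := by
        rw [hz, Equiv.apply_symm_apply]
      rw [this, hε]
      exact Fin.insertNth_self_removeNth j _
    rcases hcase with h1 | h1
    · exact mem_iUnion.2 ⟨(j, true), ⟨z, hzB, hemb 1 h1.symm⟩⟩
    · exact mem_iUnion.2 ⟨(j, false), ⟨z, hzB, hemb (-1) h1.symm⟩⟩
  have himg : ∀ p : Fin (m + 1) × Bool,
      μH[(m : ℝ)] (faceEmb p.1 (cond p.2 1 (-1)) '' B) < ∞ := by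
    intro p
    rw [(isometry_faceEmb p.1 _).hausdorffMeasure_image (Or.inl (Nat.cast_nonneg m)) B]
    exact measure_box_ne_top.lt_top
  refine ne_of_lt (lt_of_le_of_lt (measure_mono hcover) ?_)
  rw [← Set.biUnion_univ]
  exact measure_biUnion_lt_top Set.finite_univ fun p _ => himg p

end FarBoundary
namespace FarBoundary

lemma measure_frontier_le {n : ℕ} (hn : 2 ≤ n) {K : Set (Eu n)} (hK : IsConvexBody K)
    {ρ : ℝ} (hρ : 0 < ρ) (hKb : ∀ x ∈ K, ‖x‖ ≤ ρ) :
    μH[(n : ℝ) - 1] (frontier K) ≤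
      (Real.toNNReal (2 * (Real.sqrt n + 1) * ρ)) ^ ((n : ℝ) - 1) •
        μH[(n : ℝ) - 1] (cubeSphere n 1) := by
  obtain ⟨hconv, hcomp, hint⟩ := hK
  have hd : (0 : ℝ) ≤ (n : ℝ) - 1 := by
    have : (2 : ℝ) ≤ n := by exact_mod_cast hn
    linarith
  have hcl : IsClosed K := hcomp.isClosed
  have hne : K.Nonempty := hint.mono interior_subset |>.mono (Set.Subset.refl _)
  set R : ℝ := 2 * (Real.sqrt n + 1) * ρ with hRdef
  have hsqrt : (1 : ℝ) ≤ Real.sqrt n := by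
    rw [show (1 : ℝ) = Real.sqrt 1 by simp]
    exact Real.sqrt_le_sqrt (by exact_mod_cast hn.trans' (by norm_num))
  have hR : 0 < R := by positivity
  have hρR : ρ < R := by nlinarith
  obtain ⟨P, hPlip, hPK, hPvar⟩ := exists_proj hconv hcl hne
  -- coverage
  have hcov : frontier K ⊆ P '' cubeSphere n R := by
    intro x hx
    have hxK : x ∈ K := hcl.frontier_subset hx
    obtain ⟨u, hu1, hu⟩ := exists_unit_outer_normal hconv hint hx
    set T : ℝ := Real.sqrt n * R + ρ with hT
    have hT0 : 0 ≤ T := by positivity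
    have hg : Continuous fun t : ℝ => nsup (x + t • u) := by
      exact continuous_nsup.comp (continuous_const.add (continuous_id.smul continuous_const))
    have hg0 : nsup (x + (0 : ℝ) • u) < R := by
      simp only [zero_smul, add_zero]
      exact lt_of_le_of_lt ((nsup_le_norm x).trans (hKb x hxK)) hρR
    have hgT : R ≤ nsup (x + T • u) := by
      have h1 : Real.sqrt n * R ≤ ‖x + T • u‖ := by
        have h2 : ‖T • u‖ - ‖x‖ ≤ ‖x + T • u‖ := by
          have := norm_sub_norm_le (T • u) (-x)
          simpa [norm_neg, sub_neg_eq_add, add_comm] using this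
        rw [norm_smul, hu1, Real.norm_eq_abs, abs_of_nonneg hT0, mul_one] at h2
        have h3 : ‖x‖ ≤ ρ := hKb x hxK
        rw [hT] at h2 ⊢
        linarith
      have h4 := norm_le_sqrt_mul_nsup (x + T • u)
      have h5 : Real.sqrt n * R ≤ Real.sqrt n * nsup (x + T • u) := h1.trans h4
      exact le_of_mul_le_mul_left h5 (by positivity)
    have hIVT := intermediate_value_Icc hT0 hg.continuousOn
    have hmem : R ∈ Icc (nsup (x + (0 : ℝ) • u)) (nsup (x + T • u)) := ⟨hg0.le, hgT⟩
    obtain ⟨t, ht, hgt⟩ := hIVT hmem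
    set p : Eu n := x + t • u with hp
    have hpS : p ∈ cubeSphere n R := hgt
    have hPpx : P p = x := by
      have h1 : ⟪p - P p, x - P p⟫ ≤ 0 := hPvar p x hxK
      have h2 : ⟪p - x, P p - x⟫ ≤ 0 := by
        have : p - x = t • u := by rw [hp]; abel
        rw [this, real_inner_smul_left]
        have := hu (P p) (hPK p)
        rw [real_inner_comm] at this
        exact mul_nonpos_of_nonneg_of_nonpos ht.1 this
      have key : ⟪x - P p, x - P p⟫ ≤ 0 := by
        have e1 : (x - P p) = (p - P p) - (p - x) := by abel
        calc ⟪x - P p, x - P p⟫ = ⟪p - P p, x - P p⟫ - ⟪p - x, x - P p⟫ := by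
              rw [e1, inner_sub_left]
          _ = ⟪p - P p, x - P p⟫ + ⟪p - x, P p - x⟫ := by
              rw [show (x - P p) = -(P p - x) by abel]
              simp only [inner_neg_right]
              ring
          _ ≤ 0 := by linarith
      have := real_inner_self_nonpos.1 key
      rw [sub_eq_zero] at this
      exact this.symm
    exact ⟨p, hpS, hPpx⟩
  calc μH[(n : ℝ) - 1] (frontier K) ≤ μH[(n : ℝ) - 1] (P '' cubeSphere n R) :=
        measure_mono hcov
    _ ≤ ((1 : ℝ≥0) : ℝ≥0∞) ^ ((n : ℝ) - 1) * μH[(n : ℝ) - 1] (cubeSphere n R) :=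
        hPlip.hausdorffMeasure_image_le hd _
    _ = μH[(n : ℝ) - 1] (cubeSphere n R) := by
        rw [ENNReal.coe_one, ENNReal.one_rpow, one_mul]
    _ = ‖R‖₊ ^ ((n : ℝ) - 1) • μH[(n : ℝ) - 1] (cubeSphere n 1) := by
        rw [cubeSphere_eq_smul hR,
          MeasureTheory.Measure.hausdorffMeasure_smul₀ hd hR.ne' (cubeSphere n 1)]
    _ = (Real.toNNReal R) ^ ((n : ℝ) - 1) • μH[(n : ℝ) - 1] (cubeSphere n 1) := by
        rw [Real.nnnorm_of_nonneg hR.le]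
        rw [Real.toNNReal_of_nonneg hR.le]

end FarBoundary
namespace FarBoundary

lemma tendsto_core {c : ℝ} (hc : 0 < c) (k : ℕ) :
    Tendsto (fun t : ℝ => t ^ k * Real.exp (-(c * t) ^ 2 / 2)) atTop (𝓝 0) := by
  have h1 : Tendsto (fun t : ℝ => c * t) atTop atTop :=
    Tendsto.const_mul_atTop hc tendsto_id
  have h2 : Tendsto (fun t : ℝ => (c * t) ^ 2) atTop atTop := by
    have := h1.atTop_mul_atTop₀ h1
    simpa [sq] using this
  have hq : Tendsto (fun t : ℝ => (c * t) ^ 2 / 2) atTop atTop :=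
    h2.atTop_div_const two_pos
  have hcomp : Tendsto (fun t : ℝ => ((c * t) ^ 2 / 2) ^ k * Real.exp (-((c * t) ^ 2 / 2)))
      atTop (𝓝 0) := by
    have := (Real.tendsto_pow_mul_exp_neg_atTop_nhds_zero k).comp hq
    simpa [Function.comp_def] using this
  refine squeeze_zero' ?_ ?_ hcomp
  · filter_upwards [eventually_ge_atTop (0 : ℝ)] with t ht
    positivity
  · filter_upwards [eventually_ge_atTop (2 / c ^ 2), eventually_ge_atTop (0 : ℝ)] with t h2' h0
    have h3 : 2 ≤ c ^ 2 * t := by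
      rw [div_le_iff₀ (by positivity)] at h2'
      linarith
    have ht : t ≤ (c * t) ^ 2 / 2 := by
      rw [mul_pow]
      nlinarith
    have hexp : Real.exp (-(c * t) ^ 2 / 2) = Real.exp (-((c * t) ^ 2 / 2)) := by
      rw [neg_div]
    rw [hexp]
    gcongr


lemma tendsto_aux {c : ℝ} (hc : 0 < c) (a M0 : ℝ) (k : ℕ) :
    Tendsto (fun t : ℝ => Real.exp (-(c * t) ^ 2 / 2) * ((a * t) ^ k * M0)) atTop (𝓝 0) := by
  have heq : ∀ t : ℝ, Real.exp (-(c * t) ^ 2 / 2) * ((a * t) ^ k * M0)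
      = (a ^ k * M0) * (t ^ k * Real.exp (-(c * t) ^ 2 / 2)) := by
    intro t; rw [mul_pow]; ring
  simp only [heq]
  have := (tendsto_core hc k).const_mul (a ^ k * M0)
  simpa using this

end FarBoundary
/-- If `K i` are origin-symmetric convex bodies with `r i = max_{S^{n-1}} h_{K i} → ∞`,
then for any `0 < c ≤ 1` and unit `v`, the Gaussian boundary integral over
`{x ∈ ∂K i : x·v > c r i}` tends to `0`. -/
theorem far_boundary_gaussian_negligible
    (n : ℕ) (hn : 2 ≤ n) (K : ℕ → Set (Eu n))
    (hKi : ∀ i, IsConvexBody (K i)) (hsym : ∀ i, K i = -(K i))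
    (r : ℕ → ℝ) (hr : ∀ i, r i = ⨆ v : sphere (0 : Eu n) 1, suppFun (K i) ↑v)
    (hri : Tendsto r atTop atTop) :
    ∀ c : ℝ, 0 < c → c ≤ 1 → ∀ v : Eu n, ‖v‖ = 1 →
      Tendsto
        (fun i => ∫ x in {x | x ∈ frontier (K i) ∧ c * r i < ⟪x, v⟫},
          Real.exp (-‖x‖ ^ 2 / 2) ∂μH[(n : ℝ) - 1])
        atTop (𝓝 0) := by
  intro c hc hc1 v hv
  have hd : (0 : ℝ) ≤ (n : ℝ) - 1 := by
    have : (2 : ℝ) ≤ n := by exact_mod_cast hn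
    linarith
  have hdnat : (n : ℝ) - 1 = ((n - 1 : ℕ) : ℝ) := by
    have : 1 ≤ n := by omega
    push_cast [Nat.cast_sub this]
    ring
  set M : ℝ≥0∞ := μH[(n : ℝ) - 1] (FarBoundary.cubeSphere n 1) with hM
  have hMne : M ≠ ∞ := FarBoundary.cubeSphere_one_ne_top hn
  set M0 : ℝ := M.toReal with hM0
  -- `0 ∈ K i`
  have h0K : ∀ i, (0 : Eu n) ∈ K i := by
    intro i
    obtain ⟨hconv, hcomp, hint⟩ := hKi i
    obtain ⟨y, hy⟩ := hint.mono interior_subset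
    have hy' : -y ∈ K i := by
      rw [hsym i]; simpa using hy
    have h0 : (1 / 2 : ℝ) • y + (1 / 2 : ℝ) • (-y) = 0 := by
      rw [smul_neg]; abel
    exact h0 ▸ hconv hy hy' (by norm_num) (by norm_num) (by norm_num)
  -- `K i ⊆ closedBall 0 (r i)`
  have hKb : ∀ i, ∀ x ∈ K i, ‖x‖ ≤ r i := by
    intro i x hx
    obtain ⟨hconv, hcomp, hint⟩ := hKi i
    obtain ⟨C₀, hC₀⟩ := hcomp.isBounded.subset_closedBall 0
    have hbddim : ∀ w : Eu n, ‖w‖ = 1 → BddAbove ((fun y => ⟪y, w⟫) '' K i) := by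
      intro w hw
      refine ⟨C₀, ?_⟩
      rintro a ⟨y, hyK, rfl⟩
      have h1 : ‖y‖ ≤ C₀ := by
        have := hC₀ hyK
        rwa [mem_closedBall, dist_zero_right] at this
      calc ⟪y, w⟫ ≤ ‖y‖ * ‖w‖ := real_inner_le_norm y w
        _ = ‖y‖ := by rw [hw, mul_one]
        _ ≤ C₀ := h1
    have hsupple : ∀ w : Eu n, ‖w‖ = 1 → suppFun (K i) w ≤ r i := by
      intro w hw
      rw [hr i]
      refine le_ciSup_of_le ?_ (⟨w, by simpa [mem_sphere_zero_iff_norm] using hw⟩ :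
        sphere (0 : Eu n) 1) le_rfl
      obtain ⟨C₁, hC₁⟩ := hbddim w hw
      refine ⟨C₀, ?_⟩
      rintro a ⟨⟨w', hw'⟩, rfl⟩
      have hw'1 : ‖w'‖ = 1 := by simpa [mem_sphere_zero_iff_norm] using hw'
      refine csSup_le ⟨⟪(0 : Eu n), w'⟫, 0, h0K i, rfl⟩ ?_
      rintro a ⟨y, hyK, rfl⟩
      have h1 : ‖y‖ ≤ C₀ := by
        have := hC₀ hyK
        rwa [mem_closedBall, dist_zero_right] at this
      calc ⟪y, w'⟫ ≤ ‖y‖ * ‖w'‖ := real_inner_le_norm y w'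
        _ = ‖y‖ := by rw [hw'1, mul_one]
        _ ≤ C₀ := h1
    rcases eq_or_ne x 0 with rfl | hx0
    · have hw₀ : ‖(EuclideanSpace.single (⟨0, by omega⟩ : Fin n) (1 : ℝ))‖ = 1 := by
        simp [EuclideanSpace.norm_single]
      have h1 : (0 : ℝ) ≤ suppFun (K i) (EuclideanSpace.single (⟨0, by omega⟩ : Fin n) 1) := by
        refine le_csSup (hbddim _ hw₀) ⟨0, h0K i, ?_⟩
        simp
      simpa using (h1.trans (hsupple _ hw₀))
    · set w : Eu n := ‖x‖⁻¹ • x with hwdef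
      have hw : ‖w‖ = 1 := by
        rw [hwdef, norm_smul, norm_inv, norm_norm, inv_mul_cancel₀ (norm_ne_zero_iff.2 hx0)]
      have hxw : ⟪x, w⟫ = ‖x‖ := by
        rw [hwdef, real_inner_smul_right, real_inner_self_eq_norm_sq]
        have hxn : ‖x‖ ≠ 0 := norm_ne_zero_iff.2 hx0
        field_simp
      have h1 : ⟪x, w⟫ ≤ suppFun (K i) w := le_csSup (hbddim w hw) ⟨x, hx, rfl⟩
      rw [hxw] at h1
      exact h1.trans (hsupple w hw)
  -- squeeze
  have hrev : ∀ᶠ i in atTop, 1 ≤ r i := hri.eventually_ge_atTop 1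
  refine squeeze_zero' ?_ ?_
    ((FarBoundary.tendsto_aux hc (2 * (Real.sqrt n + 1)) M0 (n - 1)).comp hri)
  · filter_upwards with i
    exact integral_nonneg fun x => (Real.exp_pos _).le
  · filter_upwards [hrev] with i h1
    have hrpos : 0 < r i := lt_of_lt_of_le one_pos h1
    set s : Set (Eu n) := {x | x ∈ frontier (K i) ∧ c * r i < ⟪x, v⟫} with hs
    have hseq : s = frontier (K i) ∩ {x | c * r i < ⟪x, v⟫} := rfl
    have hsm : MeasurableSet s := by
      rw [hseq]
      refine (isClosed_frontier.measurableSet).inter ?_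
      refine measurableSet_lt measurable_const ?_
      exact (continuous_id.inner continuous_const).measurable
    have hfr := FarBoundary.measure_frontier_le hn (hKi i) hrpos (hKb i)
    have hμs : μH[(n : ℝ) - 1] s ≤
        (Real.toNNReal (2 * (Real.sqrt n + 1) * r i)) ^ ((n : ℝ) - 1) • M :=
      (measure_mono fun x hx => hx.1).trans hfr
    have hRHSne : ((Real.toNNReal (2 * (Real.sqrt n + 1) * r i)) ^ ((n : ℝ) - 1) • M) ≠ ∞ := by
      rw [ENNReal.smul_def, smul_eq_mul]
      exact ENNReal.mul_ne_top ENNReal.coe_ne_top hMne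
    have hfin : μH[(n : ℝ) - 1] s < ∞ := lt_of_le_of_lt hμs (hRHSne.lt_top)
    have hbound : ∀ x ∈ s, ‖Real.exp (-‖x‖ ^ 2 / 2)‖ ≤ Real.exp (-(c * r i) ^ 2 / 2) := by
      intro x hx
      have h2 : c * r i < ⟪x, v⟫ := hx.2
      have h3 : ⟪x, v⟫ ≤ ‖x‖ := by
        have := real_inner_le_norm x v
        rwa [hv, mul_one] at this
      have h4 : 0 ≤ c * r i := by positivity
      have h5 : (c * r i) ^ 2 ≤ ‖x‖ ^ 2 := by nlinarith
      rw [Real.norm_eq_abs, abs_of_pos (Real.exp_pos _)]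
      apply Real.exp_le_exp.2
      linarith
    have hnorm := norm_setIntegral_le_of_norm_le_const hfin hbound
    have htoReal : (μH[(n : ℝ) - 1] s).toReal
        ≤ (2 * (Real.sqrt n + 1) * r i) ^ (n - 1) * M0 := by
      have h6 := ENNReal.toReal_mono hRHSne hμs
      refine h6.trans (le_of_eq ?_)
      rw [ENNReal.smul_def, smul_eq_mul, ENNReal.toReal_mul, ENNReal.coe_toReal,
        ← hM0]
      congr 1
      rw [NNReal.coe_rpow, Real.coe_toNNReal _ (by positivity)]
      rw [hdnat, Real.rpow_natCast]
    calc (∫ x in s, Real.exp (-‖x‖ ^ 2 / 2) ∂μH[(n : ℝ) - 1])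
        ≤ ‖∫ x in s, Real.exp (-‖x‖ ^ 2 / 2) ∂μH[(n : ℝ) - 1]‖ := le_abs_self _
      _ ≤ Real.exp (-(c * r i) ^ 2 / 2) * (μH[(n : ℝ) - 1] s).toReal := hnorm
      _ ≤ Real.exp (-(c * r i) ^ 2 / 2) * ((2 * (Real.sqrt n + 1) * r i) ^ (n - 1) * M0) := by
          exact mul_le_mul_of_nonneg_left htoReal (Real.exp_pos _).le
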